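/- arXiv:0906.1372 — 2 statements merged into one kernel-verified Lean document; each statement's English description precedes it below -/
import Mathlib

section
/- Let (X,d) be a metric space and (𝒰_n) a sequence of covers of X such that each 𝒰_n is uniformly bounded (there is a_n < ∞ with diam U ≤ a_n for all U ∈ 𝒰_n), each 𝒰_n refines 𝒰_{n+1}, and the Lebesgue numbers satisfy L(𝒰_n) → ∞. For a cover 𝒰, let RipsG_{𝒰}(X) be the graph with vertex set X and an edge [x,y], x ≠ y, whenever some U ∈ 𝒰 contains both x and y. Then: (1) for n ≤ m every edge of RipsG_{𝒰_n}(X) is an edge of RipsG_{𝒰_m}(X); (2) for every n there is m ≥ n such that whenever x, y are at graph distance at most 2 in RipsG_{𝒰_n}(X), either x = y or [x,y] is an edge of RipsG_{𝒰_m}(X); (3) for each n the identity map from (X, graph metric of RipsG_{𝒰_n}(X)) to (X,d) is Lipschitz; (4) for every Lipschitz function g : V → (X,d) from a graph V there is n such that g is a short map into RipsG_{𝒰_n}(X); (5) if g, h : V → X are short maps from a graph V into RipsG_{𝒰_n}(X) with sup_v d(g(v),h(v)) < ∞, then there is m ≥ n such that for every vertex v, either g(v) = h(v) or [g(v),h(v)]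 is an edge of RipsG_{𝒰_m}(X). -/
open scoped ENNReal NNReal

/-! Edges of the Rips graph of a cover by sets of diameter `≤ a` have length `≤ a`, so following
walks gives `d ≤ a · d_G`. Conversely, once the Lebesgue number exceeds `r`, two points at
distance `≤ r` lie in a common member, hence are equal or adjacent; conclusions (2), (4) and (5)
are this fact applied to the distance bounds given by (3), by the Lipschitz constant, and by `C`. -/

/-- The Rips graph of a cover `𝒰` of a set `X`: `[x,y]`, `x ≠ y`, is an edge whenever
some member `U ∈ 𝒰` contains both `x` and `y`. -/
def ripsGraphOfCover {X : Type u} (𝒰 : Set (Set X)) : SimpleGraph X where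
  Adj x y := x ≠ y ∧ ∃ U ∈ 𝒰, x ∈ U ∧ y ∈ U
  symm := ⟨by
    rintro x y ⟨hxy, U, hU, hx, hy⟩
    exact ⟨hxy.symm, U, hU, hy, hx⟩⟩
  loopless := ⟨fun x h => h.1 rfl⟩

/-- A function from the vertex set of a graph (with its graph metric) to a metric
space is Lipschitz if there is `L < ∞` with `d(g v, g w) ≤ L · d_G(v,w)`. -/
def GraphLipschitz {V : Type w} {X : Type u} [MetricSpace X]
    (Γ : SimpleGraph V) (g : V → X) : Prop :=
  ∃ L : ℝ≥0, ∀ v w : V, edist (g v) (g w) ≤ (L : ℝ≥0∞) * (Γ.edist v w : ℝ≥0∞)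

section GraphMetric

variable {V X : Type*} [MetricSpace X]

lemma dist_le_mul_walk_length {G : SimpleGraph X} {a : ℝ}
    (hadj : ∀ x y, G.Adj x y → dist x y ≤ a) {x y : X} (p : G.Walk x y) :
    dist x y ≤ a * p.length := by
  induction p with
  | nil => simp
  | cons h p ih =>
    rw [SimpleGraph.Walk.length_cons, Nat.cast_succ, mul_add_one, add_comm]
    exact (dist_triangle _ _ _).trans (add_le_add (hadj _ _ h) ih)

lemma exists_edist_le_mul_edist_of_adj {G : SimpleGraph X} {a : ℝ}
    (hadj : ∀ x y, G.Adj x y → dist x y ≤ a) :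
    ∃ L : ℝ≥0, ∀ x y, edist x y ≤ L * G.edist x y := by
  refine ⟨(max a 1).toNNReal, fun x y => ?_⟩
  by_cases htop : G.edist x y = ⊤
  · rw [htop, ENat.toENNReal_top, ENNReal.mul_top (by simp)]
    exact le_top
  obtain ⟨p, hp⟩ := SimpleGraph.exists_walk_of_edist_ne_top htop
  have hd : dist x y ≤ max a 1 * p.length :=
    (dist_le_mul_walk_length fun u v huv => (hadj u v huv).trans (le_max_left a 1)) p
  calc edist x y = ENNReal.ofReal (dist x y) := edist_dist x y
    _ ≤ ENNReal.ofReal (max a 1 * p.length) := ENNReal.ofReal_le_ofReal hd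
    _ = (max a 1).toNNReal * G.edist x y := by
      rw [ENNReal.ofReal_mul (by positivity), ENNReal.ofReal_natCast, ← hp,
        ENat.toENNReal_coe]
      rfl

lemma dist_le_mul_of_edist_le {Γ : SimpleGraph V} {g : V → X} {L : ℝ≥0}
    (hL : ∀ v w, edist (g v) (g w) ≤ L * Γ.edist v w) {v w : V} {k : ℕ}
    (hk : Γ.edist v w ≤ k) : dist (g v) (g w) ≤ L * k := by
  have : edist (g v) (g w) ≤ ((L * k : ℝ≥0) : ℝ≥0∞) := by
    refine (hL v w).trans ?_
    push_cast
    gcongr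
    exact_mod_cast hk
  exact_mod_cast edist_le_coe.1 this

end GraphMetric

section RipsGraph

variable {X : Type*}

lemma ripsGraphOfCover_le_of_refines {𝒰 𝒱 : Set (Set X)} (h : ∀ U ∈ 𝒰, ∃ V ∈ 𝒱, U ⊆ V) :
    ripsGraphOfCover 𝒰 ≤ ripsGraphOfCover 𝒱 := by
  rintro x y ⟨hxy, U, hU, hx, hy⟩
  obtain ⟨V, hV, hUV⟩ := h U hU
  exact ⟨hxy, V, hV, hUV hx, hUV hy⟩

variable [MetricSpace X] {𝒰 : Set (Set X)}

lemma dist_le_of_ripsGraphOfCover_adj {a : ℝ}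
    (hbdd : ∀ U ∈ 𝒰, ∀ x ∈ U, ∀ y ∈ U, dist x y ≤ a) {x y : X}
    (hxy : (ripsGraphOfCover 𝒰).Adj x y) : dist x y ≤ a := by
  obtain ⟨-, U, hU, hx, hy⟩ := hxy
  exact hbdd U hU x hx y hy

lemma eq_or_ripsGraphOfCover_adj_of_dist_le {r : ℝ}
    (hLebesgue : ∀ A : Set X, (∀ x ∈ A, ∀ y ∈ A, dist x y ≤ r) → ∃ U ∈ 𝒰, A ⊆ U)
    {x y : X} (hxy : dist x y ≤ r) : x = y ∨ (ripsGraphOfCover 𝒰).Adj x y := by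
  refine or_iff_not_imp_left.2 fun hne => ?_
  have hr : 0 ≤ r := dist_nonneg.trans hxy
  obtain ⟨U, hU, hxyU⟩ := hLebesgue {x, y} <| by
    rintro u (rfl | rfl) v (rfl | rfl) <;>
      first | simpa using hr | assumption | rwa [dist_comm]
  exact ⟨hne, U, hU, hxyU (by simp), hxyU (by simp)⟩

end RipsGraph

lemma GraphLipschitz.exists_dist_le_of_adj {V X : Type*} [MetricSpace X] {Γ : SimpleGraph V}
    {g : V → X} (hg : GraphLipschitz Γ g) :
    ∃ a : ℝ, ∀ v w, Γ.Adj v w → dist (g v) (g w) ≤ a := by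
  obtain ⟨L, hL⟩ := hg
  refine ⟨L * (1 : ℕ), fun v w hvw => dist_le_mul_of_edist_le hL ?_⟩
  exact_mod_cast (SimpleGraph.edist_eq_one_iff_adj.2 hvw).le

theorem rips_graphs_of_covers_form_coarse_graph_general {X : Type u} [MetricSpace X]
    (𝒰 : ℕ → Set (Set X))
    (hbdd : ∀ n, ∃ a : ℝ, ∀ U ∈ 𝒰 n, ∀ x ∈ U, ∀ y ∈ U, dist x y ≤ a)
    (hrefine : ∀ n, ∀ U ∈ 𝒰 n, ∃ V ∈ 𝒰 (n + 1), U ⊆ V)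
    (hLebesgue : ∀ r : ℝ, ∃ N : ℕ, ∀ n ≥ N, ∀ A : Set X,
        (∀ x ∈ A, ∀ y ∈ A, dist x y ≤ r) → ∃ U ∈ 𝒰 n, A ⊆ U) :
    -- (1) edges persist along the sequence
    (∀ n m : ℕ, n ≤ m → ∀ x y : X,
        (ripsGraphOfCover (𝒰 n)).Adj x y → (ripsGraphOfCover (𝒰 m)).Adj x y) ∧
    -- (2) graph distance ≤ 2 at stage n becomes an edge at some stage m ≥ n
    (∀ n : ℕ, ∃ m ≥ n, ∀ x y : X,
        (ripsGraphOfCover (𝒰 n)).edist x y ≤ 2 →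
        x = y ∨ (ripsGraphOfCover (𝒰 m)).Adj x y) ∧
    -- (3) the identity from the graph metric at stage n to (X,d) is Lipschitz
    (∀ n : ℕ, ∃ L : ℝ≥0, ∀ x y : X,
        edist x y ≤ (L : ℝ≥0∞) * ((ripsGraphOfCover (𝒰 n)).edist x y : ℝ≥0∞)) ∧
    -- (4) Lipschitz maps from graphs are short into some stage
    (∀ (V : Type u) (Γ : SimpleGraph V) (g : V → X), GraphLipschitz Γ g →
        ∃ n : ℕ, ∀ v w : V, Γ.Adj v w →
          g v = g w ∨ (ripsGraphOfCover (𝒰 n)).Adj (g v) (g w)) ∧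
    -- (5) short maps at finite distance become adjacent at some later stage
    (∀ (V : Type u) (Γ : SimpleGraph V) (n : ℕ) (g h : V → X),
        (∀ v w : V, Γ.Adj v w → g v = g w ∨ (ripsGraphOfCover (𝒰 n)).Adj (g v) (g w)) →
        (∀ v w : V, Γ.Adj v w → h v = h w ∨ (ripsGraphOfCover (𝒰 n)).Adj (h v) (h w)) →
        (∃ C : ℝ, ∀ v : V, dist (g v) (h v) ≤ C) →
        ∃ m ≥ n, ∀ v : V,
          g v = h v ∨ (ripsGraphOfCover (𝒰 m)).Adj (g v) (h v)) := by
  have hmono : Monotone fun n => ripsGraphOfCover (𝒰 n) :=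
    monotone_nat_of_le_succ fun n => ripsGraphOfCover_le_of_refines (hrefine n)
  have hlip : ∀ n, ∃ L : ℝ≥0, ∀ x y : X,
      edist x y ≤ L * (ripsGraphOfCover (𝒰 n)).edist x y := fun n =>
    have ⟨a, ha⟩ := hbdd n
    exists_edist_le_mul_edist_of_adj fun _ _ => dist_le_of_ripsGraphOfCover_adj ha
  have hadj : ∀ r : ℝ, ∃ N, ∀ n ≥ N, ∀ x y : X,
      dist x y ≤ r → x = y ∨ (ripsGraphOfCover (𝒰 n)).Adj x y := fun r =>
    (hLebesgue r).imp fun _ hN n hn _ _ => eq_or_ripsGraphOfCover_adj_of_dist_le (hN n hn)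
  refine ⟨fun n m hnm => hmono hnm, fun n => ?_, hlip, ?_, ?_⟩
  · obtain ⟨L, hL⟩ := hlip n
    obtain ⟨N, hN⟩ := hadj (L * (2 : ℕ))
    exact ⟨max n N, le_max_left n N, fun x y hxy =>
      hN _ (le_max_right n N) x y (dist_le_mul_of_edist_le (g := id) hL hxy)⟩
  · intro V Γ g hg
    obtain ⟨a, ha⟩ := hg.exists_dist_le_of_adj
    obtain ⟨N, hN⟩ := hadj a
    exact ⟨N, fun v w hvw => hN N le_rfl _ _ (ha v w hvw)⟩
  · rintro V Γ n g h - - ⟨C, hC⟩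
    obtain ⟨N, hN⟩ := hadj C
    exact ⟨max n N, le_max_left n N, fun v => hN _ (le_max_right n N) _ _ (hC v)⟩

/-- for a sequence of uniformly bounded covers `𝒰_n` of a metric space,
each refining the next, with Lebesgue numbers tending to infinity, the Rips graphs
`RipsG_{𝒰_n}(X)` form a coarse graph of `(X,d)`: conclusions (1)–(5). -/
theorem rips_graphs_of_covers_form_coarse_graph {X : Type u} [MetricSpace X]
    (𝒰 : ℕ → Set (Set X))
    (hcover : ∀ n, ∀ x : X, ∃ U ∈ 𝒰 n, x ∈ U)
    (hbdd : ∀ n, ∃ a : ℝ, ∀ U ∈ 𝒰 n, ∀ x ∈ U, ∀ y ∈ U, dist x y ≤ a)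
    (hrefine : ∀ n, ∀ U ∈ 𝒰 n, ∃ V ∈ 𝒰 (n + 1), U ⊆ V)
    (hLebesgue : ∀ r : ℝ, ∃ N : ℕ, ∀ n ≥ N, ∀ A : Set X,
        (∀ x ∈ A, ∀ y ∈ A, dist x y ≤ r) → ∃ U ∈ 𝒰 n, A ⊆ U) :
    -- (1) edges persist along the sequence
    (∀ n m : ℕ, n ≤ m → ∀ x y : X,
        (ripsGraphOfCover (𝒰 n)).Adj x y → (ripsGraphOfCover (𝒰 m)).Adj x y) ∧
    -- (2) graph distance ≤ 2 at stage n becomes an edge at some stage m ≥ n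
    (∀ n : ℕ, ∃ m ≥ n, ∀ x y : X,
        (ripsGraphOfCover (𝒰 n)).edist x y ≤ 2 →
        x = y ∨ (ripsGraphOfCover (𝒰 m)).Adj x y) ∧
    -- (3) the identity from the graph metric at stage n to (X,d) is Lipschitz
    (∀ n : ℕ, ∃ L : ℝ≥0, ∀ x y : X,
        edist x y ≤ (L : ℝ≥0∞) * ((ripsGraphOfCover (𝒰 n)).edist x y : ℝ≥0∞)) ∧
    -- (4) Lipschitz maps from graphs are short into some stage
    (∀ (V : Type u) (Γ : SimpleGraph V) (g : V → X), GraphLipschitz Γ g →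
        ∃ n : ℕ, ∀ v w : V, Γ.Adj v w →
          g v = g w ∨ (ripsGraphOfCover (𝒰 n)).Adj (g v) (g w)) ∧
    -- (5) short maps at finite distance become adjacent at some later stage
    (∀ (V : Type u) (Γ : SimpleGraph V) (n : ℕ) (g h : V → X),
        (∀ v w : V, Γ.Adj v w → g v = g w ∨ (ripsGraphOfCover (𝒰 n)).Adj (g v) (g w)) →
        (∀ v w : V, Γ.Adj v w → h v = h w ∨ (ripsGraphOfCover (𝒰 n)).Adj (h v) (h w)) →
        (∃ C : ℝ, ∀ v : V, dist (g v) (h v) ≤ C) →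
        ∃ m ≥ n, ∀ v : V,
          g v = h v ∨ (ripsGraphOfCover (𝒰 m)).Adj (g v) (h v)) :=
  rips_graphs_of_covers_form_coarse_graph_general 𝒰 hbdd hrefine hLebesgue
end

section
/- Let (X,d_X) and (Y,d_Y) be metric spaces, let (V_n, i_{n,m}, p_n) be a coarse graph of X and (W_n, j_{n,m}, q_n) a coarse graph of Y. Suppose (f_k) is a pre-morphism from (V_n) to (W_n): each f_k : V_k → W_{n(k)} is a short map and for every k there is m ≥ n(k+1) such that j_{n(k),m}∘f_k ~ls j_{n(k+1),m}∘f_{k+1}∘i_{k,k+1} (with respect to the graph metric of W_m). Then there exists a bornologous function f : X → Y such that q_{n(k)}∘f_k ~ls f∘p_k for every k, and f is unique up to ls-equivalence: any two bornologous functions with this property are ls-equivalent. -/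
open scoped ENNReal NNReal

/-- A function between metric spaces is bornologous if for every `t > 0` there is
`s > 0` such that `d(x,y) < t` implies `d(α x, α y) < s`. -/
def Bornologous {X : Type u} {Y : Type v} [MetricSpace X] [MetricSpace Y]
    (α : X → Y) : Prop :=
  ∀ t : ℝ, 0 < t → ∃ s : ℝ, 0 < s ∧ ∀ x y : X, dist x y < t → dist (α x) (α y) < s

/-- Two functions into a metric space are ls-equivalent if they are within finite
distance from each other. -/
def LSClose {Z : Type w} {X : Type u} [MetricSpace X] (f g : Z → X) : Prop :=
  ∃ C : ℝ, ∀ z : Z, dist (f z) (g z) ≤ C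

/-- Two functions into the vertex set of a graph are ls-equivalent with respect to
the graph metric if they are within finite graph distance from each other. -/
def LSCloseGraph {Z : Type w} {W : Type u} (Γ : SimpleGraph W) (f g : Z → W) : Prop :=
  ∃ C : ℕ, ∀ z : Z, Γ.edist (f z) (g z) ≤ (C : ℕ∞)

/-- A map between graphs is short if it sends edges to edges or to vertices. -/
def Short {A : Type u} {B : Type v} (Γ : SimpleGraph A) (Λ : SimpleGraph B)
    (f : A → B) : Prop :=
  ∀ v w : A, Γ.Adj v w → f v = f w ∨ Λ.Adj (f v) (f w)

/-- A coarse graph of a metric space `X`: a direct sequence of graphs `V n` with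
short bonding maps `i n m`, together with Lipschitz maps `p n : V n → X`, satisfying
conditions (i)–(iv). -/
structure CoarseGraphOf (X : Type u) [MetricSpace X] where
  V : ℕ → Type u
  G : ∀ n, SimpleGraph (V n)
  i : ∀ n m, n ≤ m → V n → V m
  p : ∀ n, V n → X
  i_id : ∀ n (v : V n), i n n le_rfl v = v
  i_comp : ∀ n m k (h₁ : n ≤ m) (h₂ : m ≤ k) (v : V n),
    i m k h₂ (i n m h₁ v) = i n k (h₁.trans h₂) v
  i_short : ∀ n m (h : n ≤ m), Short (G n) (G m) (i n m h)
  p_lip : ∀ n, GraphLipschitz (G n) (p n)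
  -- (i) distance ≤ 2 at stage n becomes distance ≤ 1 at some later stage
  dist_two : ∀ n, ∃ m, ∃ h : n < m, ∀ v w : V n, (G n).edist v w ≤ 2 →
    i n m h.le v = i n m h.le w ∨ (G m).Adj (i n m h.le v) (i n m h.le w)
  -- (ii) the projections are compatible up to ls-equivalence
  p_compat : ∀ n, LSClose (p n) (fun v => p (n + 1) (i n (n + 1) (Nat.le_succ n) v))
  -- (iii) every Lipschitz map from a graph into X lifts to a short map
  lift : ∀ (W : Type u) (Γ : SimpleGraph W) (g : W → X), GraphLipschitz Γ g →
    ∃ (n : ℕ) (g' : W → V n), Short Γ (G n) g' ∧ LSClose (fun w => p n (g' w)) g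
  -- (iv) short maps ls-close over X become ls-close at a later stage
  sep : ∀ (W : Type u) (Γ : SimpleGraph W) (n : ℕ) (g h : W → V n),
    Short Γ (G n) g → Short Γ (G n) h →
    LSClose (fun w => p n (g w)) (fun w => p n (h w)) →
    ∃ m, ∃ hm : n < m,
      LSCloseGraph (G m) (fun w => i n m hm.le (g w)) (fun w => i n m hm.le (h w))

/-! The induced map is `q ∘ f_n ∘ g`, where `g : X → V_n` is a short lift (condition (iii)) of the
identity of `X`, seen as a Lipschitz map on the graph joining points at distance `≤ 1`. Comparing
`g` by (iv) with lifts of the identity at a larger scale `t`, and then collapsing the bounded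
distances this produces by iterating (i), shows that after bonding `g` becomes short even on the
graph at scale `t`. This gives bornologousness, and, taking for `t` a Lipschitz constant of `p_k`,
a short map `i ∘ g ∘ p_k` on `V_k` which (iv) identifies with the bonding map, whence
`q ∘ f_k ~ q ∘ f_n ∘ g ∘ p_k`. Uniqueness: `F' ~ F' ∘ p_n ∘ g ~ q ∘ f_n ∘ g`. -/

universe u

open SimpleGraph

def ripsGraph (X : Type*) [MetricSpace X] (t : ℝ) : SimpleGraph X where
  Adj x y := x ≠ y ∧ dist x y ≤ t
  symm := ⟨fun x y h => ⟨h.1.symm, dist_comm x y ▸ h.2⟩⟩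
  loopless := ⟨fun _ h => h.1 rfl⟩

section RipsGraph

variable {X : Type*} [MetricSpace X]

@[simp]
lemma ripsGraph_adj {t : ℝ} {x y : X} : (ripsGraph X t).Adj x y ↔ x ≠ y ∧ dist x y ≤ t :=
  Iff.rfl

lemma ripsGraph_mono {s t : ℝ} (h : s ≤ t) : ripsGraph X s ≤ ripsGraph X t :=
  fun _ _ hxy => ripsGraph_adj.mpr ⟨hxy.1, hxy.2.trans h⟩

lemma ripsGraph_edist_le_one {t : ℝ} {x y : X} (h : dist x y ≤ t) :
    (ripsGraph X t).edist x y ≤ 1 :=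
  edist_le_one_iff_adj_or_eq.mpr <|
    (eq_or_ne x y).elim Or.inr fun hne => Or.inl (ripsGraph_adj.mpr ⟨hne, h⟩)

end RipsGraph

section Short

variable {A B C : Type*} {Γ Γ' : SimpleGraph A} {Λ : SimpleGraph B} {Θ : SimpleGraph C}
  {f : A → B}

lemma short_iff_edist_le_one :
    Short Γ Λ f ↔ ∀ v w, Γ.Adj v w → Λ.edist (f v) (f w) ≤ 1 := by
  simp only [Short, edist_le_one_iff_adj_or_eq, or_comm]

lemma Short.comp {g : B → C} (hg : Short Λ Θ g) (hf : Short Γ Λ f) :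
    Short Γ Θ (fun v => g (f v)) := by
  intro v w h
  rcases hf v w h with e | h'
  · exact Or.inl (congrArg g e)
  · exact hg _ _ h'

lemma Short.mono (hf : Short Γ Λ f) (h : Γ' ≤ Γ) : Short Γ' Λ f :=
  fun v w hvw => hf v w (h hvw)

lemma Short.edist_le (hf : Short Γ Λ f) (v w : A) : Λ.edist (f v) (f w) ≤ Γ.edist v w := by
  rw [Γ.edist_eq_sInf]
  refine le_sInf ?_
  rintro _ ⟨p, rfl⟩
  dsimp only
  induction p with
  | nil => simp
  | cons h _ ih =>
    rw [Walk.length_cons, Nat.cast_succ, add_comm]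
    exact SimpleGraph.edist_triangle.trans (add_le_add (short_iff_edist_le_one.mp hf _ _ h) ih)

lemma Short.lsCloseGraph_comp {Z : Type*} {g h : Z → A} (hf : Short Γ Λ f)
    (hgh : LSCloseGraph Γ g h) : LSCloseGraph Λ (fun z => f (g z)) (fun z => f (h z)) :=
  let ⟨D, hD⟩ := hgh
  ⟨D, fun z => (hf.edist_le _ _).trans (hD z)⟩

lemma SimpleGraph.Walk.edist_le_half_length
    (hf : ∀ v w, Γ.edist v w ≤ 2 → Λ.edist (f v) (f w) ≤ 1) :
    ∀ {v w : A} (p : Γ.Walk v w), Λ.edist (f v) (f w) ≤ ((p.length + 1) / 2 : ℕ)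
  | _, _, .nil => by simp
  | _, _, .cons h .nil => by
    simpa using hf _ _ ((edist_eq_one_iff_adj.mpr h).le.trans one_le_two)
  | _, _, .cons h (.cons h' q) => by
    have two : Γ.edist _ _ ≤ 2 := SimpleGraph.edist_triangle.trans
      ((add_le_add (edist_eq_one_iff_adj.mpr h).le (edist_eq_one_iff_adj.mpr h').le).trans_eq
        one_add_one_eq_two)
    have halve : (q.length + 1 + 1 + 1) / 2 = 1 + (q.length + 1) / 2 := by omega
    calc _ ≤ 1 + (((q.length + 1) / 2 : ℕ) : ℕ∞) :=
          SimpleGraph.edist_triangle.trans (add_le_add (hf _ _ two) (edist_le_half_length hf q))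
      _ = _ := by simp only [Walk.length_cons, halve]; push_cast; rfl

end Short

section LSClose

variable {Z Z' X Y : Type*} [MetricSpace X] [MetricSpace Y] {f g h : Z → X}

lemma LSClose.symm (hfg : LSClose f g) : LSClose g f :=
  let ⟨C, hC⟩ := hfg
  ⟨C, fun z => dist_comm (g z) (f z) ▸ hC z⟩

lemma LSClose.trans (hfg : LSClose f g) (hgh : LSClose g h) : LSClose f h :=
  let ⟨C, hC⟩ := hfg
  let ⟨D, hD⟩ := hgh
  ⟨C + D, fun z => (dist_triangle _ (g z) _).trans (add_le_add (hC z) (hD z))⟩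

lemma LSClose.comp_right (hfg : LSClose f g) (e : Z' → Z) :
    LSClose (fun z => f (e z)) (fun z => g (e z)) :=
  let ⟨C, hC⟩ := hfg
  ⟨C, fun z => hC (e z)⟩

lemma Bornologous.lsClose_comp {F : X → Y} (hF : Bornologous F) (hfg : LSClose f g) :
    LSClose (fun z => F (f z)) (fun z => F (g z)) := by
  obtain ⟨C, hC⟩ := hfg
  obtain ⟨s, -, hs⟩ := hF (|C| + 1) (by positivity)
  exact ⟨s, fun z => (hs _ _ ((hC z).trans_lt (by linarith [le_abs_self C]))).le⟩

end LSClose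

section GraphLipschitz

variable {V W X Y : Type*} [MetricSpace X] [MetricSpace Y] {Γ : SimpleGraph V} {g : V → X}

lemma graphLipschitz_of_adj (L : ℝ≥0) (hg : ∀ v w, Γ.Adj v w → edist (g v) (g w) ≤ L) :
    GraphLipschitz Γ g := by
  have walk : ∀ {v w} (p : Γ.Walk v w), edist (g v) (g w) ≤ L * p.length := by
    intro v w p
    induction p with
    | nil => simp
    | cons h _ ih =>
      rw [Walk.length_cons, Nat.cast_succ, mul_add_one, add_comm]
      exact (edist_triangle _ _ _).trans (add_le_add (hg _ _ h) ih)
  -- not `L` itself: for `L = 0` the bound `L * ⊤ = 0` would fail on unreachable pairs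
  refine ⟨max L 1, fun v w => ?_⟩
  rcases eq_or_ne (Γ.edist v w) ⊤ with htop | htop
  · simp [htop]
  obtain ⟨p, hp⟩ := exists_walk_of_edist_ne_top htop
  rw [← hp, ENat.toENNReal_coe]
  exact (walk p).trans (by gcongr; exact le_max_left L 1)

lemma graphLipschitz_ripsGraph_id (t : ℝ) : GraphLipschitz (ripsGraph X t) id :=
  graphLipschitz_of_adj t.toNNReal fun x y h => by
    rw [edist_dist]
    exact ENNReal.ofReal_le_ofReal (ripsGraph_adj.mp h).2

lemma GraphLipschitz.exists_dist_le (hg : GraphLipschitz Γ g) :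
    ∃ L : ℝ, ∀ (c : ℕ) (v w : V), Γ.edist v w ≤ c → dist (g v) (g w) ≤ L * c := by
  obtain ⟨L, hL⟩ := hg
  refine ⟨L, fun c v w h => ?_⟩
  have hle : edist (g v) (g w) ≤ L * c :=
    (hL v w).trans (by gcongr; exact_mod_cast ENat.toENNReal_le.mpr h)
  rw [dist_edist]
  simpa using ENNReal.toReal_mono (by finiteness) hle

lemma GraphLipschitz.comp_short {Λ : SimpleGraph W} {e : W → V} (hg : GraphLipschitz Γ g)
    (he : Short Λ Γ e) : GraphLipschitz Λ (fun w => g (e w)) :=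
  let ⟨L, hL⟩ := hg
  ⟨L, fun v w => (hL _ _).trans (by gcongr; exact he.edist_le v w)⟩

lemma GraphLipschitz.exists_short_ripsGraph (hg : GraphLipschitz Γ g) :
    ∃ L : ℝ, Short Γ (ripsGraph X L) g := by
  obtain ⟨L, hL⟩ := hg.exists_dist_le
  refine ⟨L, fun v w h =>
    (eq_or_ne (g v) (g w)).imp_right fun hne => ripsGraph_adj.mpr ⟨hne, ?_⟩⟩
  simpa using hL 1 v w (edist_eq_one_iff_adj.mpr h).le

lemma GraphLipschitz.lsClose_of_lsCloseGraph {Z : Type*} {a b : Z → V}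
    (hg : GraphLipschitz Γ g) (hab : LSCloseGraph Γ a b) :
    LSClose (fun z => g (a z)) (fun z => g (b z)) := by
  obtain ⟨L, hL⟩ := hg.exists_dist_le
  obtain ⟨D, hD⟩ := hab
  exact ⟨L * D, fun z => hL D _ _ (hD z)⟩

lemma bornologous_of_lsClose_graphLipschitz {F : X → Y}
    (h : ∀ t, ∃ G : X → Y, LSClose F G ∧ GraphLipschitz (ripsGraph X t) G) : Bornologous F := by
  intro t _
  obtain ⟨G, ⟨C, hC⟩, hG⟩ := h t
  obtain ⟨L, hL⟩ := hG.exists_dist_le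
  refine ⟨|C + L + C| + 1, by positivity, fun x y hxy => ?_⟩
  have hGxy : dist (G x) (G y) ≤ L := by simpa using hL 1 x y (ripsGraph_edist_le_one hxy.le)
  calc dist (F x) (F y) ≤ dist (F x) (G x) + dist (G x) (G y) + dist (G y) (F y) :=
        dist_triangle4 _ _ _ _
    _ ≤ C + L + C := by gcongr; exacts [hC x, dist_comm (G y) (F y) ▸ hC y]
    _ < |C + L + C| + 1 := by linarith [le_abs_self (C + L + C)]

end GraphLipschitz

namespace CoarseGraphOf

variable {X : Type u} [MetricSpace X] (C : CoarseGraphOf X)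

lemma lsClose_p_i {n m : ℕ} (h : n ≤ m) : LSClose (C.p n) (fun v => C.p m (C.i n m h v)) := by
  induction m, h using Nat.le_induction with
  | base => exact ⟨0, fun v => by simp [C.i_id]⟩
  | succ m hm ih =>
    refine ih.trans ?_
    simpa only [C.i_comp] using (C.p_compat m).comp_right (C.i n m hm)

lemma exists_i_edist_le_one (c : ℕ) : ∀ n, ∃ m, ∃ h : n ≤ m, ∀ v w : C.V n,
    (C.G n).edist v w ≤ c → (C.G m).edist (C.i n m h v) (C.i n m h w) ≤ 1 := by
  induction c using Nat.strong_induction_on with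
  | _ c ih =>
  intro n
  rcases le_or_gt c 1 with hc | hc
  · exact ⟨n, le_rfl, fun v w h => by simpa only [C.i_id] using h.trans (by exact_mod_cast hc)⟩
  obtain ⟨n', hn', hhalve⟩ := C.dist_two n
  obtain ⟨m, hm, hcol⟩ := ih ((c + 1) / 2) (by omega) n'
  refine ⟨m, hn'.le.trans hm, fun v w h => ?_⟩
  rw [← C.i_comp n n' m hn'.le hm, ← C.i_comp n n' m hn'.le hm]
  refine hcol _ _ ?_
  obtain ⟨p, hp⟩ := exists_walk_of_edist_ne_top (ne_top_of_le_ne_top (ENat.natCast_ne_top c) h)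
  rw [← hp, Nat.cast_le] at h
  refine (Walk.edist_le_half_length (fun v w h =>
    edist_le_one_iff_adj_or_eq.mpr (hhalve v w h).symm) p).trans ?_
  exact_mod_cast Nat.div_le_div_right (Nat.add_le_add_right h 1)

lemma exists_lsCloseGraph_i_of_lsClose {W : Type u} {Γ : SimpleGraph W} {a b : ℕ}
    {g : W → C.V a} {h : W → C.V b} (hg : Short Γ (C.G a) g) (hh : Short Γ (C.G b) h)
    (hgh : LSClose (fun w => C.p a (g w)) (fun w => C.p b (h w))) :
    ∃ m, ∃ ha : a ≤ m, ∃ hb : b ≤ m,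
      LSCloseGraph (C.G m) (fun w => C.i a m ha (g w)) (fun w => C.i b m hb (h w)) := by
  have ha : a ≤ max a b := le_max_left a b
  have hb : b ≤ max a b := le_max_right a b
  have hclose : LSClose (fun w => C.p (max a b) (C.i a _ ha (g w)))
      (fun w => C.p (max a b) (C.i b _ hb (h w))) :=
    (((C.lsClose_p_i ha).comp_right g).symm.trans hgh).trans ((C.lsClose_p_i hb).comp_right h)
  obtain ⟨m, hm, hgraph⟩ :=
    C.sep W Γ _ _ _ ((C.i_short _ _ ha).comp hg) ((C.i_short _ _ hb).comp hh) hclose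
  exact ⟨m, ha.trans hm.le, hb.trans hm.le, by simpa only [C.i_comp] using hgraph⟩

lemma exists_short_ripsGraph_i_comp {n : ℕ} {g : X → C.V n}
    (hg : Short (ripsGraph X 1) (C.G n) g) (hgid : LSClose (fun x => C.p n (g x)) id) (t : ℝ) :
    ∃ m, ∃ h : n ≤ m, Short (ripsGraph X t) (C.G m) (fun x => C.i n m h (g x)) := by
  obtain ⟨b, g', hg', hg'id⟩ :=
    C.lift X (ripsGraph X (max t 1)) id (graphLipschitz_ripsGraph_id _)
  obtain ⟨m, hm, hb, D, hD⟩ := C.exists_lsCloseGraph_i_of_lsClose hg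
    (hg'.mono (ripsGraph_mono (le_max_right t 1))) (hgid.trans hg'id.symm)
  obtain ⟨m', hm', hcol⟩ := C.exists_i_edist_le_one (D + 1 + D) m
  refine ⟨m', hm.trans hm', short_iff_edist_le_one.mpr fun x y hxy => ?_⟩
  rw [← C.i_comp _ _ _ hm hm', ← C.i_comp _ _ _ hm hm']
  refine hcol _ _ ?_
  have hg'xy : (C.G m).edist (C.i b m hb (g' x)) (C.i b m hb (g' y)) ≤ 1 :=
    ((C.i_short b m hb).edist_le _ _).trans (short_iff_edist_le_one.mp hg' x y
      (ripsGraph_mono (le_max_left t 1) hxy))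
  calc _ ≤ (D + 1 + D : ℕ∞) := SimpleGraph.edist_triangle.trans <| add_le_add
        (SimpleGraph.edist_triangle.trans (add_le_add (hD x) hg'xy))
        (SimpleGraph.edist_comm.trans_le (hD y))
    _ = _ := by push_cast; rfl

end CoarseGraphOf

section Premorphism

variable {X Y : Type u} [MetricSpace X] [MetricSpace Y] {CV : CoarseGraphOf X}
  {CW : CoarseGraphOf Y} {nF : ℕ → ℕ} {f : ∀ k, CV.V k → CW.V (nF k)}

variable (CV CW nF f) in
/-- The coherence condition of a pre-morphism `(f_k)`. -/
def IsCoarselyCompatible : Prop :=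
  ∀ k, ∃ m, ∃ h₁ : nF k ≤ m, ∃ h₂ : nF (k + 1) ≤ m,
    LSCloseGraph (CW.G m)
      (fun v => CW.i (nF k) m h₁ (f k v))
      (fun v => CW.i (nF (k + 1)) m h₂ (f (k + 1) (CV.i k (k + 1) (Nat.le_succ k) v)))

lemma IsCoarselyCompatible.lsClose_succ (hf : IsCoarselyCompatible CV CW nF f) (k : ℕ) :
    LSClose (fun v => CW.p (nF k) (f k v))
      (fun v => CW.p (nF (k + 1)) (f (k + 1) (CV.i k (k + 1) (Nat.le_succ k) v))) := by
  obtain ⟨m, h₁, h₂, hclose⟩ := hf k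
  exact (((CW.lsClose_p_i h₁).comp_right (f k)).trans
    ((CW.p_lip m).lsClose_of_lsCloseGraph hclose)).trans ((CW.lsClose_p_i h₂).comp_right _).symm

lemma IsCoarselyCompatible.lsClose (hf : IsCoarselyCompatible CV CW nF f) {k K : ℕ}
    (h : k ≤ K) :
    LSClose (fun v => CW.p (nF k) (f k v)) (fun v => CW.p (nF K) (f K (CV.i k K h v))) := by
  induction K, h using Nat.le_induction with
  | base => exact ⟨0, fun v => by simp [CV.i_id]⟩
  | succ K hK ih =>
    refine ih.trans ?_
    simpa only [CV.i_comp] using (hf.lsClose_succ K).comp_right (CV.i k K hK)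

variable {n : ℕ} {g : X → CV.V n}

lemma IsCoarselyCompatible.bornologous_comp_lift (hf : IsCoarselyCompatible CV CW nF f)
    (hshort : ∀ k, Short (CV.G k) (CW.G (nF k)) (f k)) (hg : Short (ripsGraph X 1) (CV.G n) g)
    (hgid : LSClose (fun x => CV.p n (g x)) id) :
    Bornologous (fun x => CW.p (nF n) (f n (g x))) := by
  refine bornologous_of_lsClose_graphLipschitz fun t => ?_
  obtain ⟨m, hm, hgm⟩ := CV.exists_short_ripsGraph_i_comp hg hgid t
  exact ⟨_, (hf.lsClose hm).comp_right g, (CW.p_lip _).comp_short ((hshort m).comp hgm)⟩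

lemma IsCoarselyCompatible.lsClose_comp_lift_p (hf : IsCoarselyCompatible CV CW nF f)
    (hshort : ∀ k, Short (CV.G k) (CW.G (nF k)) (f k)) (hg : Short (ripsGraph X 1) (CV.G n) g)
    (hgid : LSClose (fun x => CV.p n (g x)) id) (k : ℕ) :
    LSClose (fun v => CW.p (nF k) (f k v)) (fun v => CW.p (nF n) (f n (g (CV.p k v)))) := by
  obtain ⟨L, hpk⟩ := (CV.p_lip k).exists_short_ripsGraph
  obtain ⟨m, hm, hgm⟩ := CV.exists_short_ripsGraph_i_comp hg hgid L
  have hp : LSClose (CV.p k) (fun v => CV.p m (CV.i n m hm (g (CV.p k v)))) :=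
    (hgid.comp_right (CV.p k)).symm.trans ((CV.lsClose_p_i hm).comp_right _)
  obtain ⟨m', hk, hm', hclose⟩ :=
    CV.exists_lsCloseGraph_i_of_lsClose (g := id) (fun _ _ h => Or.inr h) (hgm.comp hpk) hp
  simp only [CV.i_comp, id] at hclose
  exact ((hf.lsClose hk).trans ((CW.p_lip _).lsClose_of_lsCloseGraph
    ((hshort m').lsCloseGraph_comp hclose))).trans ((hf.lsClose (hm.trans hm')).comp_right _).symm

end Premorphism

/-- a pre-morphism between coarse graphs of `X` and `Y` induces a
bornologous function `f : X → Y`, unique up to ls-equivalence, with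
`q_{n(k)} ∘ f_k ~ls f ∘ p_k` for all `k`. -/
theorem premorphism_induces_bornologous_map {X Y : Type u}
    [MetricSpace X] [MetricSpace Y]
    (CV : CoarseGraphOf X) (CW : CoarseGraphOf Y)
    (nF : ℕ → ℕ) (f : ∀ k, CV.V k → CW.V (nF k))
    (hshort : ∀ k, Short (CV.G k) (CW.G (nF k)) (f k))
    (hcompat : ∀ k, ∃ m, ∃ h₁ : nF k ≤ m, ∃ h₂ : nF (k + 1) ≤ m,
      LSCloseGraph (CW.G m)
        (fun v => CW.i (nF k) m h₁ (f k v))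
        (fun v => CW.i (nF (k + 1)) m h₂ (f (k + 1) (CV.i k (k + 1) (Nat.le_succ k) v)))) :
    ∃ F : X → Y, Bornologous F ∧
      (∀ k, LSClose (fun v => CW.p (nF k) (f k v)) (fun v => F (CV.p k v))) ∧
      ∀ F' : X → Y, Bornologous F' →
        (∀ k, LSClose (fun v => CW.p (nF k) (f k v)) (fun v => F' (CV.p k v))) →
        LSClose F' F := by
  have hf : IsCoarselyCompatible CV CW nF f := hcompat
  obtain ⟨n, g, hg, hgid⟩ := CV.lift X (ripsGraph X 1) id (graphLipschitz_ripsGraph_id 1)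
  refine ⟨fun x => CW.p (nF n) (f n (g x)), hf.bornologous_comp_lift hshort hg hgid,
    hf.lsClose_comp_lift_p hshort hg hgid, fun F' hF' hF'f => ?_⟩
  exact (hF'.lsClose_comp hgid.symm).trans ((hF'f n).comp_right g).symm
end
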